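/- arXiv:2506.16657 — 6 statements merged into one kernel-verified Lean document; each statement's English description precedes it below -/
import Mathlib

section
/- Let V be a real vector space and consider the free monoid on the underlying set of V with rewriting rules: (v, w) rewrites to (v + w) whenever v and w are linearly dependent, and (0) rewrites to the empty word. If a word a rewrites in one step to b and in one step to b', then there exists a word c such that b rewrites (in zero or more steps) to c and b' rewrites (in zero or more steps) to c (local confluence of the rewriting system). -/
/-!
Disjoint redexes commute, so only overlapping redexes have to be joined (the critical pair lemma
of string rewriting). Every left-hand side has length at most two, so two overlapping redexes
either coincide, or one is a letter `0` inside a pair `(v, w)` and both rewrites agree because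
`0` is neutral, or they form a word `u v w` with `(u, v)` and `(v, w)` dependent. In the last
case, if `v = 0` both rewrites give `u w`; otherwise `u` and `w` lie on the line `ℝ v`, so
`(u + v, w)` and `(u, v + w)` are dependent and both sides rewrite to `u + v + w`.
-/

open FreeMonoid

variable (V : Type*) [AddCommGroup V] [Module ℝ V]

/-- A single rewriting step on words over `V`: replace an adjacent pair of linearly
dependent letters by their sum, or delete a letter equal to `0`. -/
inductive PLStep : FreeMonoid V → FreeMonoid V → Prop
  | pair (a b : FreeMonoid V) (v w : V) (h : ¬ LinearIndependent ℝ ![v, w]) :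
      PLStep (a * (of v * of w) * b) (a * of (v + w) * b)
  | zero (a b : FreeMonoid V) : PLStep (a * of (0 : V) * b) (a * b)

open Relation

section LinearAlgebra

variable {K M : Type*} [Field K] [AddCommGroup M] [Module K M] {u v w : M}

theorem not_linearIndependent_pair_of_mem_span_singleton (hv : v ∈ K ∙ u) (hw : w ∈ K ∙ u) :
    ¬ LinearIndependent K ![v, w] := by
  obtain ⟨a, rfl⟩ := Submodule.mem_span_singleton.1 hv
  obtain ⟨b, rfl⟩ := Submodule.mem_span_singleton.1 hw
  simpa using LinearIndependent.pair_add_smul_add_smul_iff a 0 b 0 (x := u) (y := (0 : M))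

theorem mem_span_singleton_of_not_linearIndependent_pair (hv : v ≠ 0)
    (h : ¬ LinearIndependent K ![v, w]) : w ∈ K ∙ v := by
  simpa [LinearIndependent.pair_iff' hv, Submodule.mem_span_singleton] using h

end LinearAlgebra

section StringRewriting

variable {α : Type*} (R : List α → List α → Prop)

inductive RewriteStep : List α → List α → Prop
  | mk (p q : List α) {l r : List α} : R l r → RewriteStep (p ++ l ++ q) (p ++ r ++ q)

/-- The redex `l'` starts after the prefix `m` of the redex `l` and shares the nonempty segment
`s` with it. -/
def OverlapsJoinable : Prop :=
  ∀ ⦃l r l' r' m s q q' : List α⦄, R l r → R l' r' → s ≠ [] → m ++ s = l → s ++ q = l' ++ q' →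
    Join (ReflTransGen (RewriteStep R)) (r ++ q) (m ++ r' ++ q')

variable {R}

namespace RewriteStep

theorem of_rule {l r : List α} (h : R l r) : RewriteStep R l r := by
  simpa using mk [] [] h

theorem frame {a b : List α} (p q : List α) (h : RewriteStep R a b) :
    RewriteStep R (p ++ a ++ q) (p ++ b ++ q) := by
  obtain ⟨p₀, q₀, hlr⟩ := h
  simpa using mk (p ++ p₀) (q₀ ++ q) hlr

theorem join_frame {a b : List α} (p q : List α) (h : Join (ReflTransGen (RewriteStep R)) a b) :
    Join (ReflTransGen (RewriteStep R)) (p ++ a ++ q) (p ++ b ++ q) := by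
  obtain ⟨c, hac, hbc⟩ := h
  have lift := ReflTransGen.lift (r := RewriteStep R) (fun x => p ++ x ++ q)
    fun _ _ => frame p q
  exact ⟨p ++ c ++ q, lift _ _ hac, lift _ _ hbc⟩

theorem join_of_disjoint {l r l' r' : List α} (h : R l r) (h' : R l' r') (m : List α) :
    Join (ReflTransGen (RewriteStep R)) (r ++ m ++ l') (l ++ m ++ r') :=
  ⟨r ++ m ++ r', .single (by simpa using (of_rule h').frame (r ++ m) []),
    .single (by simpa using (of_rule h).frame [] (m ++ r'))⟩

theorem join_of_offset (hR : OverlapsJoinable R) {l r l' r' m q q' : List α}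
    (h : R l r) (h' : R l' r') (heq : l ++ q = m ++ (l' ++ q')) (p : List α) :
    Join (ReflTransGen (RewriteStep R)) (p ++ r ++ q) (p ++ m ++ r' ++ q') := by
  suffices Join (ReflTransGen (RewriteStep R)) (r ++ q) (m ++ r' ++ q') by
    simpa using join_frame p [] this
  rcases List.append_eq_append_iff.1 heq with ⟨k, rfl, rfl⟩ | ⟨_ | ⟨x, s⟩, rfl, hs⟩
  · simpa using join_frame [] q' (join_of_disjoint h h' k)
  · simp only [List.append_nil, List.nil_append] at h hs ⊢
    simpa [hs] using join_frame [] q' (join_of_disjoint h h' [])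
  · exact hR h h' (List.cons_ne_nil x s) rfl hs.symm

theorem join_of_overlapsJoinable (hR : OverlapsJoinable R) {a b b' : List α}
    (h₁ : RewriteStep R a b) (h₂ : RewriteStep R a b') :
    Join (ReflTransGen (RewriteStep R)) b b' := by
  obtain ⟨p, q, h⟩ := h₁
  generalize hw : p ++ _ ++ q = w at h₂
  obtain ⟨p', q', h'⟩ := h₂
  simp only [List.append_assoc] at hw
  rcases List.append_eq_append_iff.1 hw with ⟨m, rfl, hm⟩ | ⟨m, rfl, hm⟩
  · simpa using join_of_offset hR h h' hm p
  · simpa using symm_of _ (join_of_offset hR h' h hm p')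

end RewriteStep

end StringRewriting

section PLRule

inductive PLRule : List V → List V → Prop
  | pair {v w : V} : ¬ LinearIndependent ℝ ![v, w] → PLRule [v, w] [v + w]
  | zero : PLRule [0] []

variable {V}

theorem PLRule.join_of_overlap {u v w : V} (huv : ¬ LinearIndependent ℝ ![u, v])
    (hvw : ¬ LinearIndependent ℝ ![v, w]) (q : List V) :
    Join (ReflTransGen (RewriteStep (PLRule V))) ((u + v) :: w :: q) (u :: (v + w) :: q) := by
  rcases eq_or_ne v 0 with rfl | hv
  · simpa using refl_of _ (u :: w :: q)
  have hu : u ∈ ℝ ∙ v :=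
    mem_span_singleton_of_not_linearIndependent_pair hv (LinearIndependent.pair_symm_iff.not.1 huv)
  have hw : w ∈ ℝ ∙ v := mem_span_singleton_of_not_linearIndependent_pair hv hvw
  have hv' : v ∈ ℝ ∙ v := Submodule.mem_span_singleton_self v
  refine ⟨(u + v + w) :: q, .single ?_, .single ?_⟩
  · simpa using (RewriteStep.of_rule (pair
      (not_linearIndependent_pair_of_mem_span_singleton (add_mem hu hv') hw))).frame [] q
  · simpa [add_assoc] using (RewriteStep.of_rule (pair
      (not_linearIndependent_pair_of_mem_span_singleton hu (add_mem hv' hw)))).frame [] q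

theorem PLRule.overlapsJoinable : OverlapsJoinable (PLRule V) := by
  intro l r l' r' m s q q' h h' hs hl hq'
  have hrefl := refl_of (Join (ReflTransGen (RewriteStep (PLRule V))))
  cases h with
  | zero =>
    obtain ⟨rfl, rfl⟩ : m = [] ∧ s = [0] := by
      rcases m with _ | ⟨x, m⟩ <;> simp_all
    cases h' with
    | zero =>
      obtain rfl : q = q' := by simpa using hq'
      exact hrefl _
    | pair _ =>
      obtain ⟨rfl, rfl⟩ := by simpa using hq'
      simpa using hrefl _
  | @pair v w hvw =>
    rcases m with _ | ⟨x, _ | ⟨y, m⟩⟩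
    · obtain rfl : s = [v, w] := by simpa using hl
      cases h' with
      | zero =>
        obtain ⟨rfl, rfl⟩ := by simpa using hq'
        simpa using hrefl _
      | pair _ =>
        obtain ⟨rfl, rfl, rfl⟩ := by simpa using hq'
        exact hrefl _
    · obtain ⟨rfl, rfl⟩ := by simpa using hl
      cases h' with
      | zero =>
        obtain ⟨rfl, rfl⟩ := by simpa using hq'
        simpa using hrefl _
      | pair hwx =>
        obtain ⟨rfl, rfl⟩ := by simpa using hq'
        exact join_of_overlap hvw hwx q'
    · simp [hs] at hl

theorem PLStep.rewriteStep_toList {a b : FreeMonoid V} (h : PLStep V a b) :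
    RewriteStep (PLRule V) a.toList b.toList := by
  cases h with
  | pair x y v w hvw => simpa using RewriteStep.mk x.toList y.toList (PLRule.pair hvw)
  | zero x y => simpa using RewriteStep.mk x.toList y.toList PLRule.zero

theorem RewriteStep.plStep_ofList {l l' : List V} (h : RewriteStep (PLRule V) l l') :
    PLStep V (ofList l) (ofList l') := by
  obtain ⟨p, q, hlr⟩ := h
  cases hlr with
  | pair hvw => simpa [mul_assoc] using PLStep.pair (ofList p) (ofList q) _ _ hvw
  | zero => simpa [mul_assoc] using PLStep.zero (ofList p) (ofList q)

end PLRule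

/-- Local confluence: if `a` rewrites in one step to `b` and in one step to `b'`,
then `b` and `b'` have a common reduct. -/
theorem local_confluence_of_PL_rewriting {a b b' : FreeMonoid V}
    (h1 : PLStep V a b) (h2 : PLStep V a b') :
    ∃ c : FreeMonoid V,
      Relation.ReflTransGen (PLStep V) b c ∧ Relation.ReflTransGen (PLStep V) b' c := by
  obtain ⟨c, hbc, hb'c⟩ := RewriteStep.join_of_overlapsJoinable PLRule.overlapsJoinable
    h1.rewriteStep_toList h2.rewriteStep_toList
  have lift := ReflTransGen.lift (r := RewriteStep (PLRule V)) (p := PLStep V) ofList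
    fun _ _ => RewriteStep.plStep_ofList
  exact ⟨ofList c, by simpa [Function.onFun] using lift _ _ hbc,
    by simpa [Function.onFun] using lift _ _ hb'c⟩
end

section
/- Every element of the group PL_0(V) of piecewise linear paths has a unique minimal representative: a word (v_1, ..., v_n) over V such that all v_i are nonzero and every consecutive pair (v_i, v_{i+1}) is linearly independent. -/
/-!
Letting a letter `v` act on minimal words by "prepend `v`, then merge it into the first letter
while the two are linearly dependent (dropping zeros)" defines an action of `FMon(V)` on minimal
words. Dependent letters lie on one line, so merging is associative there, and the action respects
both defining relations; it therefore factors through `PL₀(V)`. Applying an element to the empty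
word yields a minimal representative of it, and a minimal word acts on the empty word by
reproducing itself, so any two minimal representatives of one element coincide.
-/

open FreeMonoid

variable (V : Type*) [AddCommGroup V] [Module ℝ V]

/-- The defining relations of `PL₀(V)`: `(v, w) ~ (v + w)` for linearly dependent
`v, w`, and `(0) ~ ε`. -/
inductive PLRel : FreeMonoid V → FreeMonoid V → Prop
  | pair (v w : V) (h : ¬ LinearIndependent ℝ ![v, w]) :
      PLRel (of v * of w) (of (v + w))
  | zero : PLRel (of (0 : V)) 1

/-- The group (here: quotient monoid) `PL₀(V)` of piecewise linear paths. -/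
abbrev PL0 := (conGen (PLRel V)).Quotient

variable {V}

/-- The quotient map `FMon(V) → PL₀(V)`. -/
abbrev PLmk : FreeMonoid V →* PL0 V := (conGen (PLRel V)).mk'

/-- A minimal word: all letters nonzero, consecutive letters linearly independent. -/
def IsMinWord (l : List V) : Prop :=
  (∀ v ∈ l, v ≠ 0) ∧ l.Chain' (fun v w => LinearIndependent ℝ ![v, w])

open Submodule

section LinearDependence

variable {K M : Type*} [Field K] [AddCommGroup M] [Module K M] {x y z : M}

theorem not_linearIndependent_pair_iff_mem_span_singleton (hx : x ≠ 0) :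
    ¬ LinearIndependent K ![x, y] ↔ y ∈ K ∙ x := by
  simp [LinearIndependent.pair_iff' hx, mem_span_singleton]

theorem not_linearIndependent_pair_of_mem_span_singleton_s1 (hx : x ∈ K ∙ z) (hy : y ∈ K ∙ z) :
    ¬ LinearIndependent K ![x, y] := by
  rcases eq_or_ne x 0 with rfl | hx0
  · exact fun h => h.ne_zero 0 rfl
  obtain ⟨a, rfl⟩ := mem_span_singleton.mp hx
  have ha : a ≠ 0 := by rintro rfl; simp at hx0
  rw [not_linearIndependent_pair_iff_mem_span_singleton hx0, span_singleton_smul_eq ha.isUnit]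
  exact hy

end LinearDependence

open scoped Classical in
noncomputable def reduceCons : V → List V → List V
  | v, [] => if v = 0 then [] else [v]
  | v, w :: t => if v = 0 then w :: t else
      if LinearIndependent ℝ ![v, w] then v :: w :: t else reduceCons (v + w) t

section ReduceCons

variable {v w : V} {t m : List V}

@[simp]
theorem reduceCons_zero (m : List V) : reduceCons 0 m = m := by
  cases m <;> simp [reduceCons]

theorem reduceCons_nil (hv : v ≠ 0) : reduceCons v [] = [v] := by
  simp [reduceCons, hv]

theorem reduceCons_cons_of_linearIndependent (hv : v ≠ 0) (h : LinearIndependent ℝ ![v, w]) :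
    reduceCons v (w :: t) = v :: w :: t := by
  simp [reduceCons, hv, h]

theorem reduceCons_cons_of_not_linearIndependent (hv : v ≠ 0)
    (h : ¬ LinearIndependent ℝ ![v, w]) : reduceCons v (w :: t) = reduceCons (v + w) t := by
  simp [reduceCons, hv, h]

theorem isMinWord_nil : IsMinWord ([] : List V) := ⟨by simp, List.isChain_nil⟩

theorem IsMinWord.tail (h : IsMinWord (v :: t)) : IsMinWord t :=
  ⟨fun x hx => h.1 x (List.mem_cons_of_mem _ hx), h.2.tail⟩

theorem IsMinWord.ne_zero (h : IsMinWord (v :: t)) : v ≠ 0 :=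
  h.1 v List.mem_cons_self

theorem reduceCons_of_isMinWord (h : IsMinWord (v :: t)) : reduceCons v t = v :: t := by
  cases t with
  | nil => exact reduceCons_nil h.ne_zero
  | cons u t =>
    exact reduceCons_cons_of_linearIndependent h.ne_zero (List.isChain_cons_cons.mp h.2).1

theorem IsMinWord.reduceCons (hm : IsMinWord m) (v : V) : IsMinWord (reduceCons v m) := by
  induction m generalizing v with
  | nil =>
    rcases eq_or_ne v 0 with rfl | hv
    · simpa using isMinWord_nil
    · rw [reduceCons_nil hv]
      exact ⟨by simpa using hv, List.isChain_singleton _⟩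
  | cons w t ih =>
    rcases eq_or_ne v 0 with rfl | hv
    · simpa using hm
    by_cases h : LinearIndependent ℝ ![v, w]
    · rw [reduceCons_cons_of_linearIndependent hv h]
      refine ⟨?_, List.isChain_cons_cons.mpr ⟨h, hm.2⟩⟩
      intro x hx
      rcases List.mem_cons.mp hx with rfl | hx
      exacts [hv, hm.1 x hx]
    · rw [reduceCons_cons_of_not_linearIndependent hv h]
      exact ih hm.tail (v + w)

theorem reduceCons_reduceCons (hm : IsMinWord m) (h : ¬ LinearIndependent ℝ ![v, w]) :
    reduceCons v (reduceCons w m) = reduceCons (v + w) m := by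
  induction m generalizing v w with
  | nil =>
    rcases eq_or_ne w 0 with rfl | hw
    · simp
    rcases eq_or_ne v 0 with rfl | hv
    · simp
    rw [reduceCons_nil hw, reduceCons_cons_of_not_linearIndependent hv h]
  | cons u t ih =>
    rcases eq_or_ne w 0 with rfl | hw
    · simp
    rcases eq_or_ne v 0 with rfl | hv
    · simp
    by_cases hwu : LinearIndependent ℝ ![w, u]
    · rw [reduceCons_cons_of_linearIndependent hw hwu,
        reduceCons_cons_of_not_linearIndependent hv h]
    have hvw : v ∈ ℝ ∙ w := (not_linearIndependent_pair_iff_mem_span_singleton hw).mp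
      (by rwa [LinearIndependent.pair_symm_iff])
    have hu : u ∈ ℝ ∙ w := (not_linearIndependent_pair_iff_mem_span_singleton hw).mp hwu
    have hwu_mem : w + u ∈ ℝ ∙ w := add_mem (mem_span_singleton_self w) hu
    have hvw_mem : v + w ∈ ℝ ∙ w := add_mem hvw (mem_span_singleton_self w)
    rw [reduceCons_cons_of_not_linearIndependent hw hwu,
      ih hm.tail (not_linearIndependent_pair_of_mem_span_singleton_s1 hvw hwu_mem), ← add_assoc]
    rcases eq_or_ne (v + w) 0 with h0 | h0
    · rw [h0, zero_add, reduceCons_zero, reduceCons_of_isMinWord hm]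
    · rw [reduceCons_cons_of_not_linearIndependent h0
        (not_linearIndependent_pair_of_mem_span_singleton_s1 hvw_mem hu)]

end ReduceCons

variable (V) in
abbrev MinWord : Type _ := {l : List V // IsMinWord l}

noncomputable def MinWord.reduceCons (v : V) : Function.End (MinWord V) :=
  fun m => ⟨_root_.reduceCons v m.1, m.2.reduceCons v⟩

noncomputable def reduce : FreeMonoid V →* Function.End (MinWord V) :=
  FreeMonoid.lift MinWord.reduceCons

theorem conGen_le_ker_reduce : conGen (PLRel V) ≤ Con.ker (reduce (V := V)) := by
  refine Con.conGen_le.mpr ?_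
  rintro _ _ (⟨v, w, h⟩ | _) <;> funext m <;> apply Subtype.ext
  · exact reduceCons_reduceCons m.2 h
  · exact reduceCons_zero m.1

theorem reduce_of_mul_apply (v : V) (a : FreeMonoid V) (m : MinWord V) :
    (reduce (of v * a) m).1 = reduceCons v (reduce a m).1 := by
  rw [map_mul]
  change (reduce (of v) (reduce a m)).1 = _
  rw [reduce, lift_eval_of]
  rfl

theorem reduce_ofList_nil {l : List V} (hl : IsMinWord l) :
    reduce (ofList l) ⟨[], isMinWord_nil⟩ = ⟨l, hl⟩ := by
  induction l with
  | nil => rfl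
  | cons v t ih =>
    apply Subtype.ext
    rw [ofList_cons, reduce_of_mul_apply, ih hl.tail]
    exact reduceCons_of_isMinWord hl

theorem PLmk_reduceCons (v : V) (m : List V) :
    PLmk (ofList (reduceCons v m)) = PLmk (of v) * PLmk (ofList m) := by
  have PLmk_zero : PLmk (of (0 : V)) = 1 := (Con.eq _).mpr (.of _ _ PLRel.zero)
  induction m generalizing v with
  | nil =>
    rcases eq_or_ne v 0 with rfl | hv
    · simp [PLmk_zero]
    · rw [reduceCons_nil hv, ofList_singleton, ofList_nil, map_one, mul_one]
  | cons w t ih =>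
    rcases eq_or_ne v 0 with rfl | hv
    · simp [PLmk_zero]
    by_cases h : LinearIndependent ℝ ![v, w]
    · rw [reduceCons_cons_of_linearIndependent hv h, ofList_cons, map_mul]
    · have PLmk_pair : PLmk (of v * of w) = PLmk (of (v + w)) :=
        (Con.eq _).mpr (.of _ _ (PLRel.pair v w h))
      rw [reduceCons_cons_of_not_linearIndependent hv h, ih, ← PLmk_pair, ofList_cons, map_mul,
        map_mul, mul_assoc]

theorem PLmk_reduce (a : FreeMonoid V) (m : MinWord V) :
    PLmk (ofList (reduce a m).1) = PLmk a * PLmk (ofList m.1) := by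
  induction a using FreeMonoid.inductionOn' with
  | one => rw [map_one, map_one, one_mul]; rfl
  | of_mul v a ih =>
    rw [reduce_of_mul_apply, PLmk_reduceCons, ih, map_mul, mul_assoc]

theorem PL0_exists_unique_minimal_representative_general (x : PL0 V) :
    ∃! l : List V, IsMinWord l ∧ PLmk (FreeMonoid.ofList l) = x := by
  obtain ⟨a, rfl⟩ := Con.mk'_surjective x
  let nil : MinWord V := ⟨[], isMinWord_nil⟩
  refine ⟨(reduce a nil).1, ⟨(reduce a nil).2, by simpa [nil] using PLmk_reduce a nil⟩, ?_⟩
  rintro l ⟨hl, hla⟩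
  have hreduce : reduce (ofList l) = reduce a := conGen_le_ker_reduce ((Con.eq _).mp hla)
  rw [← hreduce, reduce_ofList_nil hl]

/-- Unique minimal representatives in `PL₀(V)`. -/
theorem PL0_exists_unique_minimal_representative [FiniteDimensional ℝ V] (x : PL0 V) :
    ∃! l : List V, IsMinWord l ∧ PLmk (FreeMonoid.ofList l) = x :=
  PL0_exists_unique_minimal_representative_general x
end

section
/- Let A be a set and P : A → V a map into a real vector space such that P(a) and P(a') are linearly independent whenever a ≠ a' (in particular P(a) ≠ 0 for all a). Then the induced group homomorphism from the free group FG(A) to PL_0(V) is injective. -/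
/-!
Send a path `(v₁, …, vₙ)` to the product of the letters `vᵢ ∈ ℝ ∙ vᵢ` in the free product of
the lines of `V`. This respects the relations of `PL₀(V)`, because two dependent vectors lie on a
common line. Composed with `FG(A) → PL₀(V)` it becomes the free product, over the injective index
map `a ↦ ℝ ∙ P a`, of the injective maps `ℤ → ℝ ∙ P a, n ↦ n • P a`; such a map is injective
since it sends reduced words to reduced words.
-/

open FreeMonoid

variable (V : Type*) [AddCommGroup V] [Module ℝ V]

variable {V}

open Function Monoid

namespace Monoid.CoprodI

variable {ι κ : Type*} {G : ι → Type*} {H : κ → Type*} [∀ i, Monoid (G i)] [∀ k, Monoid (H k)]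
  {e : ι → κ} {f : ∀ i, G i →* H (e i)}

def Word.map (he : Injective e) (hf : ∀ i, Injective (f i)) (w : Word G) : Word H where
  toList := w.toList.map fun p => ⟨e p.1, f p.1 p.2⟩
  ne_one := by
    simp only [List.mem_map]
    rintro _ ⟨p, hp, rfl⟩
    exact (map_ne_one_iff (f p.1) (hf p.1)).2 (w.ne_one p hp)
  chain_ne := (List.isChain_map _).2 (w.chain_ne.imp fun _ _ h => he.ne h)

theorem Word.prod_map (he : Injective e) (hf : ∀ i, Injective (f i)) (w : Word G) :
    (w.map he hf).prod = lift (fun i => of.comp (f i)) w.prod := by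
  simp only [Word.prod, Word.map, map_list_prod, List.map_map, Function.comp_def, lift_of,
    MonoidHom.comp_apply]

theorem Word.map_injective (he : Injective e) (hf : ∀ i, Injective (f i)) :
    Injective (Word.map he hf) := by
  intro w w' h
  have hsigma : Injective fun p : (Σ i, G i) => (⟨e p.1, f p.1 p.2⟩ : Σ k, H k) := by
    rintro ⟨i, m⟩ ⟨j, n⟩ h
    obtain ⟨hij, hmn⟩ := Sigma.mk.inj_iff.1 h
    obtain rfl := he hij
    exact Sigma.ext rfl (heq_of_eq (hf i (eq_of_heq hmn)))
  exact Word.ext ((List.map_injective_iff.2 hsigma) (congrArg Word.toList h))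

theorem lift_comp_of_injective (he : Injective e) (hf : ∀ i, Injective (f i)) :
    Injective (lift fun i => (of (i := e i)).comp (f i)) := by
  classical
  intro x y hxy
  obtain ⟨w, rfl⟩ : ∃ w : Word G, w.prod = x := ⟨Word.equiv x, Word.equiv.symm_apply_apply x⟩
  obtain ⟨w', rfl⟩ : ∃ w' : Word G, w'.prod = y := ⟨Word.equiv y, Word.equiv.symm_apply_apply y⟩
  rw [← Word.prod_map he hf, ← Word.prod_map he hf] at hxy
  rw [Word.map_injective he hf (Word.equiv.symm.injective hxy)]

end Monoid.CoprodI

theorem FreeGroup.lift_injective_of_not_isOfFinOrder {G : Type*} [Group G] {g : G}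
    (hg : ¬IsOfFinOrder g) : Injective (FreeGroup.lift fun _ : Unit => g) := by
  intro x y hxy
  obtain ⟨m, rfl⟩ : ∃ m : ℤ, of () ^ m = x :=
    ⟨freeGroupUnitEquivInt x, freeGroupUnitEquivInt.symm_apply_apply x⟩
  obtain ⟨n, rfl⟩ : ∃ n : ℤ, of () ^ n = y :=
    ⟨freeGroupUnitEquivInt y, freeGroupUnitEquivInt.symm_apply_apply y⟩
  simp only [map_zpow, lift_apply_of] at hxy
  rw [injective_zpow_iff_not_isOfFinOrder.2 hg hxy]

theorem injective_span_singleton_of_linearIndependent_pair {K M ι : Type*} [DivisionRing K]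
    [AddCommGroup M] [Module K M] {P : ι → M}
    (hP : ∀ a a', a ≠ a' → LinearIndependent K ![P a, P a']) :
    Injective fun a => K ∙ P a := by
  intro a a' (h : K ∙ P a = K ∙ P a')
  by_contra hne
  obtain ⟨c, hc⟩ := Submodule.mem_span_singleton.1 (h ▸ Submodule.mem_span_singleton_self (P a))
  exact (linearIndependent_fin2.1 (hP a a' hne)).2 c (by simpa using hc)

theorem not_isOfFinAddOrder_of_ne_zero (K : Type*) {M : Type*} [DivisionRing K] [CharZero K]
    [AddCommGroup M] [Module K M] {x : M} (hx : x ≠ 0) : ¬IsOfFinAddOrder x := by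
  rw [isOfFinAddOrder_iff_nsmul_eq_zero]
  rintro ⟨n, hn, h⟩
  rw [← Nat.cast_smul_eq_nsmul K] at h
  exact (smul_eq_zero.1 h).elim (Nat.cast_ne_zero.2 hn.ne') hx

theorem not_linearIndependent_pair_neg {R M : Type*} [Ring R] [Nontrivial R]
    [AddCommGroup M] [Module R M] (v : M) : ¬LinearIndependent R ![v, -v] := fun h =>
  one_ne_zero (LinearIndependent.pair_iff.1 h 1 1 (by simp)).1

theorem PLmk_of_mul_of {v w : V} (h : ¬LinearIndependent ℝ ![v, w]) :
    PLmk (of v) * PLmk (of w) = PLmk (of (v + w)) := by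
  rw [← map_mul]
  exact (Con.eq _).2 (ConGen.Rel.of _ _ (PLRel.pair v w h))

theorem PLmk_of_zero : PLmk (of (0 : V)) = 1 :=
  (Con.eq _).2 (ConGen.Rel.of _ _ PLRel.zero)

theorem isUnit_PLmk_of (v : V) : IsUnit (PLmk (of v)) :=
  ⟨⟨PLmk (of v), PLmk (of (-v)),
    by rw [PLmk_of_mul_of (not_linearIndependent_pair_neg v), add_neg_cancel, PLmk_of_zero],
    by rw [PLmk_of_mul_of (by simpa using not_linearIndependent_pair_neg (-v)), neg_add_cancel,
      PLmk_of_zero]⟩, rfl⟩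

variable (V) in
/-- The free product of all subspaces of `V` as additive groups; only lines `ℝ ∙ v` get used. -/
abbrev LineCoprod := CoprodI fun l : Submodule ℝ V => Multiplicative l

def lineOf (v : V) : LineCoprod V :=
  CoprodI.of (i := ℝ ∙ v) (Multiplicative.ofAdd ⟨v, Submodule.mem_span_singleton_self v⟩)

theorem lineOf_zero : lineOf (0 : V) = 1 := map_one CoprodI.of

theorem LineCoprod.of_congr {l l' : Submodule ℝ V} (h : l = l') {x : V} (hx : x ∈ l)
    (hx' : x ∈ l') :
    (CoprodI.of (i := l) (Multiplicative.ofAdd ⟨x, hx⟩) : LineCoprod V) =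
      CoprodI.of (i := l') (Multiplicative.ofAdd ⟨x, hx'⟩) := by
  subst h; rfl

theorem lineOf_eq_of_mem {v x : V} (hx : x ∈ ℝ ∙ v) :
    lineOf x = CoprodI.of (i := ℝ ∙ v) (Multiplicative.ofAdd ⟨x, hx⟩) := by
  rcases eq_or_ne x 0 with rfl | hx0
  · exact lineOf_zero.trans (map_one CoprodI.of).symm
  obtain ⟨c, rfl⟩ := Submodule.mem_span_singleton.1 hx
  have hc : c ≠ 0 := by rintro rfl; exact hx0 (zero_smul ℝ v)
  exact LineCoprod.of_congr (Submodule.span_singleton_smul_eq (IsUnit.mk0 c hc) v) _ _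

theorem lineOf_mul_lineOf {v w : V} (h : ¬LinearIndependent ℝ ![v, w]) :
    lineOf v * lineOf w = lineOf (v + w) := by
  rcases eq_or_ne v 0 with rfl | hv
  · rw [lineOf_zero, one_mul, zero_add]
  obtain ⟨c, rfl⟩ : ∃ c : ℝ, c • v = w := by simpa [LinearIndependent.pair_iff' hv] using h
  have hv' := Submodule.mem_span_singleton_self (R := ℝ) v
  have hw := Submodule.smul_mem _ c hv'
  rw [lineOf_eq_of_mem hv', lineOf_eq_of_mem hw, lineOf_eq_of_mem (add_mem hv' hw), ← map_mul]
  rfl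

def PL0.toLineCoprod : PL0 V →* LineCoprod V :=
  Con.lift _ (FreeMonoid.lift lineOf) <| Con.conGen_le.2 <| by
    rintro _ _ (⟨v, w, h⟩ | _) <;> rw [Con.ker_rel]
    · rw [map_mul, lift_eval_of, lift_eval_of, lift_eval_of, lineOf_mul_lineOf h]
    · rw [lift_eval_of, map_one, lineOf_zero]

theorem PL0.toLineCoprod_PLmk_of (v : V) : PL0.toLineCoprod (PLmk (of v)) = lineOf v :=
  rfl

theorem freeGroup_embeds_in_PL0 {A : Type*} (P : A → V)
    (hP0 : ∀ a, P a ≠ 0)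
    (hP : ∀ a a', a ≠ a' → LinearIndependent ℝ ![P a, P a']) :
    ∃ F : FreeGroup A →* PL0 V,
      (∀ a, F (FreeGroup.of a) = PLmk (FreeMonoid.of (P a))) ∧
      Function.Injective F := by
  let F : FreeGroup A →* PL0 V :=
    (Units.coeHom _).comp (FreeGroup.lift fun a => (isUnit_PLmk_of (P a)).unit)
  have hF a : F (FreeGroup.of a) = PLmk (of (P a)) := by simp [F]
  refine ⟨F, hF, ?_⟩
  let g a : FreeGroup Unit →* Multiplicative (ℝ ∙ P a) :=
    FreeGroup.lift fun _ => Multiplicative.ofAdd ⟨P a, Submodule.mem_span_singleton_self _⟩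
  have hg a : Injective (g a) := FreeGroup.lift_injective_of_not_isOfFinOrder <| by
    rw [isOfFinOrder_ofAdd_iff]
    exact not_isOfFinAddOrder_of_ne_zero ℝ (Subtype.coe_ne_coe.1 (hP0 a))
  have hcomp : PL0.toLineCoprod.comp F =
      (CoprodI.lift fun a => CoprodI.of.comp (g a)).comp freeGroupEquivCoprodI.toMonoidHom :=
    FreeGroup.ext_hom _ _ fun a => by
      rw [MonoidHom.comp_apply, hF, PL0.toLineCoprod_PLmk_of]
      simp [g, lineOf]
  have hinj : Injective (PL0.toLineCoprod.comp F) := hcomp ▸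
    (CoprodI.lift_comp_of_injective (injective_span_singleton_of_linearIndependent_pair hP)
      hg).comp freeGroupEquivCoprodI.injective
  exact Injective.of_comp (f := PL0.toLineCoprod) hinj
end

section
/- The pairing ⟨·,·⟩ : Γ_m(V) ⊗ Ω^m(V) → K defined by ⟨α, ω⟩ = i* P_{m,m}(α ⊗ ω), where i : {0} → V is the inclusion of the origin, satisfies the explicit formula ⟨e^α ⊗ e_I, z^β ⊗ dz_J⟩ = (−1)^{m(m−1)/2} α! δ_{α,β} δ_{I,J}, where z^β ⊗ dz_J and e^α ⊗ e_I are the monomial bases of polynomial m-forms and m-currents associated to dual bases (z_i) of V* and (e_i) of V; in particular the pairing is nondegenerate in each weight. -/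
/-!
STATEMENT 11: The pairing `⟨α, ω⟩ = i^* P_{m,m}(α ⊗ ω)` between polynomial `m`-currents
and polynomial `m`-forms satisfies
`⟨e^α ⊗ e_I, z^β ⊗ dz_J⟩ = (−1)^{m(m−1)/2} α! δ_{α,β} δ_{I,J}`.

Forms are modelled in coordinates as in the paper: a form assigns to each finite index
set `s` (the increasing wedge `dz_s`) a polynomial coefficient.  The current
`e^α ⊗ e_I` acts by `L_{e}^α ι_{e_{i₁}} ⋯ ι_{e_{i_m}}` (indices of `I` in increasing
order) followed by evaluation at the origin.
-/

open MvPolynomial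

variable {K : Type*} [Field K] [CharZero K] {n : ℕ}

/-- Polynomial differential forms on `K^n` in coordinates. -/
abbrev PForm (K : Type*) [CommSemiring K] (n : ℕ) :=
  Finset (Fin n) → MvPolynomial (Fin n) K

/-- Interior product with the `j`-th constant basis vector field. -/
noncomputable def iotaB (j : Fin n) (ω : PForm K n) : PForm K n :=
  fun s => if j ∈ s then 0
    else ((-1 : MvPolynomial (Fin n) K) ^ (s.filter (· < j)).card) * ω (insert j s)

/-- The iterated Lie derivative (= partial derivative of coefficients) `∏ⱼ ∂ⱼ^{α j}`. -/
noncomputable def Dpow (α : Fin n → ℕ) : Module.End K (MvPolynomial (Fin n) K) :=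
  ((List.finRange n).map (fun j => ((pderiv j).toLinearMap ^ (α j)))).prod

/-- The pairing `⟨e^α ⊗ e_I , ω⟩`: apply `ι_{e_{i₁}} ⋯ ι_{e_{i_m}}` (indices of `I`
increasing), then `L_{e₁}^{α₁} ⋯ L_{e_n}^{α_n}`, take the `0`-form part and evaluate
at the origin. -/
noncomputable def pairCF (α : Fin n →₀ ℕ) (I : Finset (Fin n)) (ω : PForm K n) : K :=
  constantCoeff ((Dpow (fun j => α j)) (((I.sort (· ≤ ·)).foldr iotaB ω) ∅))

/-- The basis `m`-form `z^β ⊗ dz_J`. -/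
noncomputable def basisForm (β : Fin n →₀ ℕ) (J : Finset (Fin n)) : PForm K n :=
  fun s => if s = J then monomial β (1 : K) else 0

/-!
Contracting `z^β dz_J` successively with `e_{i₁}, …, e_{i_m}` (`i₁ < ⋯ < i_m`), the `k`-th
contraction passes the `k - 1` smaller indices still in front of `dz_{i_k}`, so what is left is
`(-1)^(0 + 1 + ⋯ + (m-1)) z^β` if `I = J` and `0` otherwise. Then `∂^α z^β` is
`∏ⱼ β_j (β_j - 1) ⋯ (β_j - α_j + 1) z^(β - α)`: its value at the origin vanishes unless
`β ≤ α`, its coefficient vanishes unless `α ≤ β`, and for `α = β` it is `α!`.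
-/

section Differentiation

variable {R σ : Type*} [CommSemiring R]

theorem pderiv_pow_monomial (j : σ) (k : ℕ) (β : σ →₀ ℕ) (c : R) :
    ((pderiv j).toLinearMap ^ k) (monomial β c)
      = monomial (β - Finsupp.single j k) (c * (β j).descFactorial k) := by
  induction k with
  | zero => simp
  | succ k ih =>
    rw [pow_succ', Module.End.mul_apply, ih, Derivation.coeFn_coe, pderiv_monomial,
      Finsupp.tsub_apply, Finsupp.single_eq_same, tsub_tsub, ← Finsupp.single_add,
      Nat.descFactorial_succ]
    congr 1
    push_cast
    ring

theorem list_prod_pderiv_pow_monomial [DecidableEq σ] (α : σ → ℕ) {l : List σ} (hl : l.Nodup)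
    (β : σ →₀ ℕ) (c : R) :
    (l.map fun j => (pderiv j).toLinearMap ^ α j).prod (monomial β c)
      = monomial (β - ∑ j ∈ l.toFinset, Finsupp.single j (α j))
          (c * ∏ j ∈ l.toFinset, ((β j).descFactorial (α j) : R)) := by
  induction l with
  | nil => simp
  | cons j rest ih =>
    obtain ⟨hj, hrest⟩ := List.nodup_cons.mp hl
    have hj' : j ∉ rest.toFinset := List.mem_toFinset.not.mpr hj
    have hβj : (β - ∑ i ∈ rest.toFinset, Finsupp.single i (α i)) j = β j := by
      have hzero : ∑ i ∈ rest.toFinset, Finsupp.single i (α i) j = 0 :=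
        Finset.sum_eq_zero fun i hi => Finsupp.single_eq_of_ne (ne_of_mem_of_not_mem hi hj').symm
      rw [Finsupp.tsub_apply, Finsupp.finsetSum_apply, hzero, Nat.sub_zero]
    rw [List.map_cons, List.prod_cons, Module.End.mul_apply, ih hrest, pderiv_pow_monomial, hβj,
      List.toFinset_cons, Finset.sum_insert hj', Finset.prod_insert hj', tsub_tsub, add_comm]
    congr 1
    ring

end Differentiation

section Pairing

variable {F : Type*} [Field F] {n : ℕ}

theorem dpow_monomial (α β : Fin n →₀ ℕ) (c : F) :
    Dpow α (monomial β c) = monomial (β - α) (c * ∏ j, ((β j).descFactorial (α j) : F)) := by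
  rw [Dpow, list_prod_pderiv_pow_monomial _ (List.nodup_finRange n), List.toFinset_finRange,
    Finsupp.univ_sum_single]

theorem constantCoeff_dpow_monomial (α β : Fin n →₀ ℕ) (c : F) :
    constantCoeff (Dpow α (monomial β c)) = if α = β then c * ∏ j, ((α j).factorial : F) else 0 := by
  rw [dpow_monomial, constantCoeff_monomial]
  by_cases hαβ : α = β
  · subst hαβ
    simp [Nat.descFactorial_self]
  rw [if_neg hαβ, ite_eq_right_iff]
  intro hβα
  obtain ⟨j, hj⟩ : ∃ j, β j < α j := by
    by_contra! h
    exact hαβ (le_antisymm (Finsupp.le_def.mpr h) (tsub_eq_zero_iff_le.mp hβα))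
  exact mul_eq_zero_of_right c <| Finset.prod_eq_zero (Finset.mem_univ j) <| by
    simp [Nat.descFactorial_eq_zero_iff_lt.mpr hj]

theorem foldr_iotaB_apply (ω : PForm F n) {l : List (Fin n)} (hl : l.Pairwise (· < ·))
    (s : Finset (Fin n)) (hs : ∀ x ∈ s, ∀ y ∈ l, x < y) :
    l.foldr iotaB ω s = (-1) ^ (∑ k ∈ Finset.range l.length, (s.card + k)) * ω (s ∪ l.toFinset) := by
  induction l generalizing s with
  | nil => simp
  | cons j rest ih =>
    obtain ⟨hj_lt, hrest⟩ := List.pairwise_cons.mp hl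
    have hj : j ∉ s := fun h => lt_irrefl j (hs j h j List.mem_cons_self)
    have hbelow : s.filter (· < j) = s :=
      Finset.filter_true_of_mem fun x hx => hs x hx j List.mem_cons_self
    have hs' : ∀ x ∈ insert j s, ∀ y ∈ rest, x < y := by
      intro x hx y hy
      rcases Finset.mem_insert.mp hx with rfl | hx
      · exact hj_lt y hy
      · exact hs x hx y (List.mem_cons_of_mem j hy)
    rw [List.foldr_cons, iotaB, if_neg hj, hbelow, ih hrest _ hs', Finset.card_insert_of_notMem hj,
      ← mul_assoc, ← pow_add, List.length_cons, Finset.sum_range_succ', List.toFinset_cons,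
      Finset.insert_union, Finset.union_insert]
    congr 2
    rw [add_zero, add_comm]
    exact congrArg (· + _) (Finset.sum_congr rfl fun k _ => by omega)

theorem foldr_iotaB_sort_empty (ω : PForm F n) (I : Finset (Fin n)) :
    (I.sort (· ≤ ·)).foldr iotaB ω ∅ = (-1 : F) ^ (I.card * (I.card - 1) / 2) • ω I := by
  rw [foldr_iotaB_apply ω (Finset.sortedLT_sort I).pairwise ∅ (by simp)]
  simp [Finset.sum_range_id, smul_eq_C_mul]

end Pairing

theorem pairing_monomial_bases_general (α β : Fin n →₀ ℕ) (I J : Finset (Fin n)) (m : ℕ)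
    (hI : I.card = m) :
    pairCF α I (basisForm β J) =
      if α = β ∧ I = J then
        ((-1 : K) ^ (m * (m - 1) / 2)) * ∏ j, ((Nat.factorial (α j) : K))
      else 0 := by
  rw [pairCF, foldr_iotaB_sort_empty, hI, basisForm]
  by_cases hIJ : I = J
  · rw [if_pos hIJ, map_smul, smul_eq_C_mul, map_mul, constantCoeff_C,
      constantCoeff_dpow_monomial]
    simp [hIJ]
  · simp [hIJ]

/-- `⟨e^α ⊗ e_I, z^β ⊗ dz_J⟩ = (−1)^{m(m−1)/2} α! δ_{α,β} δ_{I,J}`. -/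
theorem pairing_monomial_bases (α β : Fin n →₀ ℕ) (I J : Finset (Fin n)) (m : ℕ)
    (hI : I.card = m) (hJ : J.card = m) :
    pairCF α I (basisForm β J) =
      if α = β ∧ I = J then
        ((-1 : K) ^ (m * (m - 1) / 2)) * ∏ j, ((Nat.factorial (α j) : K))
      else 0 :=
  pairing_monomial_bases_general α β I J m hI
end

section
/- Let g be a Lie algebra and f : W → g an equivariant map from a g-representation W to the adjoint representation. Define the Peiffer pairing ⟨u,v⟩ = f(u) ▷ v + f(v) ▷ u on W and let Pf(W) be its image; set Q(W) = W / Pf(W). Then the bracket [u,v] := f(u) ▷ v descends to a well-defined Lie bracket on Q(W), f descends to a Lie algebra homomorphism δ : Q(W) → g, the g-action descends to an action by derivations, and (δ : Q(W) → g, ▷) is a crossed module of Lie algebras (in particular the Peiffer identity δ(u) ▷ v = [u,v] holds). -/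
/-!
STATEMENT 15: The Peiffer quotient `Q(W) = W / Pf(W)` of an equivariant map
`f : W → 𝔤` from a `𝔤`-representation carries a Lie bracket `[u,v] = f(u) ▷ v`, `f`
descends to a Lie algebra map `δ : Q(W) → 𝔤`, the `𝔤`-action descends to an action by
derivations, and all together form a crossed module of Lie algebras (in particular
the Peiffer identity `δ(u) ▷ v = [u,v]` holds).
-/

variable {K L W : Type*} [CommRing K]
  [LieRing L] [LieAlgebra K L]
  [AddCommGroup W] [Module K W] [LieRingModule L W] [LieModule K L W]

/-- The Peiffer subspace of `W` relative to `f : W → 𝔤`: the span of the elements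
`⟨u,v⟩ = f(u) ▷ v + f(v) ▷ u`. -/
def peifferSub (f : W →ₗ[K] L) : Submodule K W :=
  Submodule.span K {w | ∃ u v : W, w = ⁅f u, v⁆ + ⁅f v, u⁆}

theorem peiffer_quotient_is_crossed_module (f : W →ₗ[K] L)
    (hf : ∀ (x : L) (w : W), f ⁅x, w⁆ = ⁅x, f w⁆) :
    -- `Pf(W)` is a subrepresentation contained in `ker f`:
    (∀ (x : L), ∀ w ∈ peifferSub f, ⁅x, w⁆ ∈ peifferSub f) ∧
    (∀ w ∈ peifferSub f, f w = 0) ∧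
    -- the crossed module structure on `Q(W) = W / Pf(W)`:
    ∃ (B : (W ⧸ peifferSub f) →ₗ[K] (W ⧸ peifferSub f) →ₗ[K] (W ⧸ peifferSub f))
      (δ : (W ⧸ peifferSub f) →ₗ[K] L)
      (ρ : L →ₗ[K] (W ⧸ peifferSub f) →ₗ[K] (W ⧸ peifferSub f)),
      -- the bracket descends from `[u,v] = f(u) ▷ v`:
      (∀ u v : W, B (Submodule.Quotient.mk u) (Submodule.Quotient.mk v) =
          Submodule.Quotient.mk ⁅f u, v⁆) ∧
      -- it is a Lie bracket:
      (∀ a b, B a b = - B b a) ∧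
      (∀ a b c, B (B a b) c + B (B b c) a + B (B c a) b = 0) ∧
      -- `f` descends to a Lie algebra morphism `δ`:
      (∀ u : W, δ (Submodule.Quotient.mk u) = f u) ∧
      (∀ a b, δ (B a b) = ⁅δ a, δ b⁆) ∧
      -- the action descends,
      (∀ (x : L) (w : W), ρ x (Submodule.Quotient.mk w) = Submodule.Quotient.mk ⁅x, w⁆) ∧
      -- acts by derivations,
      (∀ x a b, ρ x (B a b) = B (ρ x a) b + B a (ρ x b)) ∧
      -- is a Lie algebra action,
      (∀ x y a, ρ ⁅x, y⁆ a = ρ x (ρ y a) - ρ y (ρ x a)) ∧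
      -- and is compatible with `δ`:
      (∀ x a, δ (ρ x a) = ⁅x, δ a⁆) ∧
      -- the Peiffer identity:
      (∀ a b, ρ (δ a) b = B a b) := by

  classical
  set P := peifferSub f with hP
  have hgen : ∀ u v : W, ⁅f u, v⁆ + ⁅f v, u⁆ ∈ P := fun u v =>
    Submodule.subset_span ⟨u, v, rfl⟩
  -- P is invariant under the action
  have hinv : ∀ x : L, P ≤ P.comap (LieModule.toEnd K L W x) := by
    intro x
    rw [hP, peifferSub, Submodule.span_le]
    rintro w ⟨u, v, rfl⟩
    simp only [SetLike.mem_coe, Submodule.mem_comap, LieModule.toEnd_apply_apply]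
    have key : ⁅x, ⁅f u, v⁆ + ⁅f v, u⁆⁆ =
        (⁅f ⁅x, u⁆, v⁆ + ⁅f v, ⁅x, u⁆⁆) + (⁅f u, ⁅x, v⁆⁆ + ⁅f ⁅x, v⁆, u⁆) := by
      rw [hf, hf, lie_add, leibniz_lie x (f u) v, leibniz_lie x (f v) u]
      abel
    rw [key]
    exact add_mem (hgen _ _) (hgen _ _)
  have hinv' : ∀ (x : L), ∀ w ∈ P, ⁅x, w⁆ ∈ P := fun x w hw => hinv x hw
  -- P is contained in ker f
  have hker : P ≤ LinearMap.ker f := by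
    rw [hP, peifferSub, Submodule.span_le]
    rintro w ⟨u, v, rfl⟩
    simp only [SetLike.mem_coe, LinearMap.mem_ker, map_add, hf, lie_lie]
    rw [← lie_skew (f u) (f v)]
    abel
  have hker' : ∀ w ∈ P, f w = 0 := fun w hw => hker hw
  -- ⁅f u, w⁆ ∈ P whenever u ∈ P
  have hleft : ∀ u ∈ P, ∀ w : W, ⁅f u, w⁆ ∈ P := by
    intro u hu w
    have h1 : ⁅f u, w⁆ = (⁅f u, w⁆ + ⁅f w, u⁆) - ⁅f w, u⁆ := by abel
    rw [h1]
    exact sub_mem (hgen u w) (hinv' (f w) u hu)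
  refine ⟨hinv', hker', ?_⟩
  -- the descended action
  set act : L → (W ⧸ P) →ₗ[K] W ⧸ P :=
    fun x => P.mapQ P (LieModule.toEnd K L W x) (hinv x) with hact
  have act_mk : ∀ (x : L) (w : W),
      act x (Submodule.Quotient.mk w) = Submodule.Quotient.mk ⁅x, w⁆ := by
    intro x w
    simp [hact, Submodule.mapQ_apply]
  set ρ : L →ₗ[K] (W ⧸ P) →ₗ[K] W ⧸ P :=
    { toFun := act
      map_add' := by
        intro x y
        apply LinearMap.ext
        intro q
        obtain ⟨w, rfl⟩ := Submodule.Quotient.mk_surjective P q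
        simp [act_mk, add_lie]
      map_smul' := by
        intro c x
        apply LinearMap.ext
        intro q
        obtain ⟨w, rfl⟩ := Submodule.Quotient.mk_surjective P q
        simp [act_mk, smul_lie] } with hρ
  have ρ_mk : ∀ (x : L) (w : W),
      ρ x (Submodule.Quotient.mk w) = Submodule.Quotient.mk ⁅x, w⁆ := act_mk
  -- the descended bracket
  have hB0 : P ≤ LinearMap.ker (ρ.comp f) := by
    intro u hu
    rw [LinearMap.mem_ker]
    apply LinearMap.ext
    intro q
    obtain ⟨w, rfl⟩ := Submodule.Quotient.mk_surjective P q
    simp only [LinearMap.comp_apply, ρ_mk, LinearMap.zero_apply]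
    rw [Submodule.Quotient.mk_eq_zero]
    exact hleft u hu w
  set B : (W ⧸ P) →ₗ[K] (W ⧸ P) →ₗ[K] W ⧸ P := P.liftQ (ρ.comp f) hB0 with hB
  have B_mk : ∀ u v : W, B (Submodule.Quotient.mk u) (Submodule.Quotient.mk v) =
      Submodule.Quotient.mk ⁅f u, v⁆ := by
    intro u v
    simp only [hB, Submodule.liftQ_apply, LinearMap.comp_apply, ρ_mk]
  -- the descended map δ
  set δ : (W ⧸ P) →ₗ[K] L := P.liftQ f hker with hδ
  have δ_mk : ∀ u : W, δ (Submodule.Quotient.mk u) = f u := fun u =>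
    Submodule.liftQ_apply P f u
  -- skew symmetry
  have hskew : ∀ a b, B a b = - B b a := by
    intro a b
    obtain ⟨u, rfl⟩ := Submodule.Quotient.mk_surjective P a
    obtain ⟨v, rfl⟩ := Submodule.Quotient.mk_surjective P b
    rw [eq_neg_iff_add_eq_zero, B_mk, B_mk, ← Submodule.Quotient.mk_add,
      Submodule.Quotient.mk_eq_zero]
    exact hgen u v
  -- δ is a Lie algebra morphism
  have hδB : ∀ a b, δ (B a b) = ⁅δ a, δ b⁆ := by
    intro a b
    obtain ⟨u, rfl⟩ := Submodule.Quotient.mk_surjective P a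
    obtain ⟨v, rfl⟩ := Submodule.Quotient.mk_surjective P b
    rw [B_mk, δ_mk, δ_mk, δ_mk, hf]
  -- ρ is a Lie algebra action
  have hρlie : ∀ x y a, ρ ⁅x, y⁆ a = ρ x (ρ y a) - ρ y (ρ x a) := by
    intro x y a
    obtain ⟨w, rfl⟩ := Submodule.Quotient.mk_surjective P a
    rw [ρ_mk, ρ_mk, ρ_mk, ρ_mk, ρ_mk, ← Submodule.Quotient.mk_sub, lie_lie]
  -- compatibility δ ∘ ρ
  have hδρ : ∀ x a, δ (ρ x a) = ⁅x, δ a⁆ := by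
    intro x a
    obtain ⟨w, rfl⟩ := Submodule.Quotient.mk_surjective P a
    rw [ρ_mk, δ_mk, δ_mk, hf]
  -- Peiffer identity
  have hpeiffer : ∀ a b, ρ (δ a) b = B a b := by
    intro a b
    obtain ⟨u, rfl⟩ := Submodule.Quotient.mk_surjective P a
    obtain ⟨v, rfl⟩ := Submodule.Quotient.mk_surjective P b
    rw [δ_mk, ρ_mk, B_mk]
  -- derivation property
  have hder : ∀ x a b, ρ x (B a b) = B (ρ x a) b + B a (ρ x b) := by
    intro x a b
    obtain ⟨u, rfl⟩ := Submodule.Quotient.mk_surjective P a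
    obtain ⟨v, rfl⟩ := Submodule.Quotient.mk_surjective P b
    rw [B_mk, ρ_mk, ρ_mk, ρ_mk, B_mk, B_mk, ← Submodule.Quotient.mk_add, hf,
      leibniz_lie]
  -- mixed identity, from Peiffer + action
  have hmix : ∀ a b c, B (B a b) c = B a (B b c) - B b (B a c) := by
    intro a b c
    rw [← hpeiffer (B a b) c, hδB, hρlie, hpeiffer, hpeiffer, hpeiffer, hpeiffer]
  -- Jacobi identity
  have hjac : ∀ a b c, B (B a b) c + B (B b c) a + B (B c a) b = 0 := by
    intro a b c
    rw [hmix a b c, hskew (B b c) a, hskew (B c a) b, hskew a c]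
    simp only [map_neg]
    abel
  exact ⟨B, δ, ρ, B_mk, hskew, hjac, δ_mk, hδB, ρ_mk, hder, hρlie, hδρ, hpeiffer⟩
end

section
/- Let g, h be Lie algebras, f = (f_1, f_0) : (δ : h_1 → h_0) → (δ : g_1 → g_0) a morphism of crossed modules of Lie algebras. Define the pullback f_0* g_1 = {(X, a) ∈ h_0 ⋉ g_1 : f_0(X) = −δ(a)}, where the semidirect product uses the action of h_0 on g_1 via f_0. Then f_0* g_1 is a Lie subalgebra with bracket [(X,a),(Y,b)] = ([X,Y], −[a,b]), the maps δ(X,a) = X and the action X ▷ (Y,b) = ([X,Y], f_0(X) ▷ b) make (δ : f_0* g_1 → h_0, ▷) a crossed module of Lie algebras, and (f̃_1, f_0) with f̃_1(X,a) = −a is a morphism of crossed modules to (δ : g_1 → g_0). -/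
/-!
The pullback `f₀* g₁` is the kernel of `π(X, a) = f₀ X + δ a`, hence a submodule of `h₀ × g₁`.
On it the pullback condition `f₀ X = -δ a` and the Peiffer identity turn the action of `f₀ X`
into `-⁅a, ·⁆`, which collapses the semidirect product bracket to `(⁅X, Y⁆, -⁅a, b⁆)` and gives
the Peiffer identity of the new crossed module. The remaining axioms hold on all of `h₀ × g₁`,
since `h₀` acts on both factors by derivations.
-/

/-- A crossed module of Lie algebras. -/
structure XModLie (K : Type*) (g₀ g₁ : Type*) [CommRing K]
    [LieRing g₀] [LieAlgebra K g₀] [LieRing g₁] [LieAlgebra K g₁] where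
  /-- the boundary map -/
  δ : g₁ →ₗ⁅K⁆ g₀
  /-- the action of `g₀` on `g₁` -/
  act : g₀ →ₗ[K] g₁ →ₗ[K] g₁
  act_bracket : ∀ (x : g₀) (a b : g₁), act x ⁅a, b⁆ = ⁅act x a, b⁆ + ⁅a, act x b⁆
  bracket_act : ∀ (x y : g₀) (a : g₁), act ⁅x, y⁆ a = act x (act y a) - act y (act x a)
  equivar : ∀ (x : g₀) (a : g₁), δ (act x a) = ⁅x, δ a⁆
  peiffer : ∀ a b : g₁, act (δ a) b = ⁅a, b⁆

variable {K h₀ h₁ g₀ g₁ : Type*} [CommRing K]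
  [LieRing h₀] [LieAlgebra K h₀] [LieRing h₁] [LieAlgebra K h₁]
  [LieRing g₀] [LieAlgebra K g₀] [LieRing g₁] [LieAlgebra K g₁]

namespace XModLie

def pullbackLie (p q : h₀ × g₁) : h₀ × g₁ := (⁅p.1, q.1⁆, -⁅p.2, q.2⁆)

theorem neg_pullbackLie_snd (p q : h₀ × g₁) : -(pullbackLie p q).2 = ⁅-p.2, -q.2⁆ := by
  rw [pullbackLie, neg_neg, neg_lie, lie_neg, neg_neg]

variable (G : XModLie K g₀ g₁)

theorem act_neg_δ (a b : g₁) : G.act (-G.δ a) b = -⁅a, b⁆ := by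
  rw [map_neg, LinearMap.neg_apply, G.peiffer]

theorem act_neg_lie (x : g₀) (a b : g₁) :
    G.act x (-⁅a, b⁆) = -⁅G.act x a, b⁆ + -⁅a, G.act x b⁆ := by
  rw [map_neg, G.act_bracket, neg_add]

variable (f₀ : h₀ →ₗ⁅K⁆ g₀)

/-- The map `π : h₀ ⋉ g₁ → g₀` of the paper, as a linear map. -/
def pi : h₀ × g₁ →ₗ[K] g₀ := f₀.toLinearMap.coprod G.δ.toLinearMap

def pullback : Submodule K (h₀ × g₁) := LinearMap.ker (G.pi f₀)

theorem mem_pullback {p : h₀ × g₁} : p ∈ G.pullback f₀ ↔ f₀ p.1 = -G.δ p.2 := by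
  rw [pullback, LinearMap.mem_ker, pi, LinearMap.coprod_apply, eq_neg_iff_add_eq_zero]
  rfl

theorem coe_pullback : (G.pullback f₀ : Set (h₀ × g₁)) = {p | f₀ p.1 = -G.δ p.2} :=
  Set.ext fun _ => G.mem_pullback f₀

def pullbackAct (X : h₀) (p : h₀ × g₁) : h₀ × g₁ := (⁅X, p.1⁆, G.act (f₀ X) p.2)

variable {G f₀}

theorem act_fst_of_mem_pullback {p : h₀ × g₁} (hp : p ∈ G.pullback f₀) (b : g₁) :
    G.act (f₀ p.1) b = -⁅p.2, b⁆ := by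
  rw [(G.mem_pullback f₀).1 hp, act_neg_δ]

theorem pullbackLie_mem {p q : h₀ × g₁} (hp : p ∈ G.pullback f₀) (hq : q ∈ G.pullback f₀) :
    pullbackLie p q ∈ G.pullback f₀ := by
  rw [mem_pullback] at hp hq ⊢
  simp only [pullbackLie, LieHom.map_lie, hp, hq, map_neg, neg_neg, lie_neg, neg_lie]

theorem semidirectLie_eq_pullbackLie {p q : h₀ × g₁} (hp : p ∈ G.pullback f₀)
    (hq : q ∈ G.pullback f₀) :
    (⁅p.1, q.1⁆, G.act (f₀ p.1) q.2 - G.act (f₀ q.1) p.2 + ⁅p.2, q.2⁆) = pullbackLie p q := by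
  rw [act_fst_of_mem_pullback hp, act_fst_of_mem_pullback hq, lie_skew p.2 q.2, pullbackLie]
  congr 1
  abel

theorem pullbackAct_mem (X : h₀) {p : h₀ × g₁} (hp : p ∈ G.pullback f₀) :
    G.pullbackAct f₀ X p ∈ G.pullback f₀ := by
  rw [mem_pullback] at hp ⊢
  rw [pullbackAct, LieHom.map_lie, hp, G.equivar, lie_neg]

variable (G f₀)

theorem pullbackAct_pullbackLie (X : h₀) (p q : h₀ × g₁) :
    G.pullbackAct f₀ X (pullbackLie p q) =
      pullbackLie (G.pullbackAct f₀ X p) q + pullbackLie p (G.pullbackAct f₀ X q) := by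
  simp only [pullbackAct, pullbackLie, Prod.mk_add_mk, act_neg_lie]
  rw [leibniz_lie]

theorem pullbackAct_lie (X Y : h₀) (p : h₀ × g₁) :
    G.pullbackAct f₀ ⁅X, Y⁆ p =
      G.pullbackAct f₀ X (G.pullbackAct f₀ Y p) - G.pullbackAct f₀ Y (G.pullbackAct f₀ X p) := by
  simp only [pullbackAct, Prod.mk_sub_mk, LieHom.map_lie, G.bracket_act, lie_lie]

variable {G f₀}

theorem pullbackAct_fst_eq_pullbackLie {p q : h₀ × g₁} (hp : p ∈ G.pullback f₀) :
    G.pullbackAct f₀ p.1 q = pullbackLie p q := by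
  rw [pullbackAct, act_fst_of_mem_pullback hp, pullbackLie]

theorem δ_neg_snd_of_mem_pullback {p : h₀ × g₁} (hp : p ∈ G.pullback f₀) :
    G.δ (-p.2) = f₀ p.1 := by
  rw [map_neg, (G.mem_pullback f₀).1 hp]

variable (G f₀)

theorem neg_pullbackAct_snd (X : h₀) (p : h₀ × g₁) :
    -(G.pullbackAct f₀ X p).2 = G.act (f₀ X) (-p.2) :=
  (map_neg _ _).symm

end XModLie

open XModLie in
theorem pullback_crossed_module_of_Lie_algebras_general
    (G : XModLie K g₀ g₁)
    (f₀ : h₀ →ₗ⁅K⁆ g₀) :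
    -- the pullback set
    let S : Set (h₀ × g₁) := {p | f₀ p.1 = - G.δ p.2}
    -- the candidate bracket, boundary and action on `h₀ × g₁`
    let B : h₀ × g₁ → h₀ × g₁ → h₀ × g₁ := fun p q => (⁅p.1, q.1⁆, -⁅p.2, q.2⁆)
    let actP : h₀ → h₀ × g₁ → h₀ × g₁ := fun X p => (⁅X, p.1⁆, G.act (f₀ X) p.2)
    -- `S` is a linear subspace closed under the bracket `B`:
    (∀ p ∈ S, ∀ q ∈ S, p + q ∈ S) ∧
    (∀ (c : K), ∀ p ∈ S, c • p ∈ S) ∧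
    (∀ p ∈ S, ∀ q ∈ S, B p q ∈ S) ∧
    -- on `S`, the semidirect product bracket coincides with `B`:
    (∀ p ∈ S, ∀ q ∈ S,
      (⁅p.1, q.1⁆, G.act (f₀ p.1) q.2 - G.act (f₀ q.1) p.2 + ⁅p.2, q.2⁆) = B p q) ∧
    -- `actP` preserves `S` and, with `δ(X,a) = X`, satisfies the crossed module axioms:
    (∀ (X : h₀), ∀ p ∈ S, actP X p ∈ S) ∧
    (∀ (X : h₀), ∀ p ∈ S, ∀ q ∈ S, actP X (B p q) = B (actP X p) q + B p (actP X q)) ∧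
    (∀ (X Y : h₀) (p : h₀ × g₁), actP ⁅X, Y⁆ p = actP X (actP Y p) - actP Y (actP X p)) ∧
    (∀ (X : h₀) (p : h₀ × g₁), (actP X p).1 = ⁅X, p.1⁆) ∧
    (∀ p ∈ S, ∀ q ∈ S, actP p.1 q = B p q) ∧
    -- `(f̃₁, f₀)` with `f̃₁(X,a) = −a` is a morphism of crossed modules:
    (∀ p ∈ S, G.δ (-p.2) = f₀ p.1) ∧
    (∀ p ∈ S, ∀ q ∈ S, -((B p q).2) = ⁅-p.2, -q.2⁆) ∧
    (∀ (X : h₀), ∀ p ∈ S, -((actP X p).2) = G.act (f₀ X) (-p.2)) := by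
  intro S B actP
  have hS : S = G.pullback f₀ := (G.coe_pullback f₀).symm
  rw [hS]
  exact ⟨fun _ hp _ hq => add_mem hp hq,
    fun c _ hp => Submodule.smul_mem _ c hp,
    fun _ hp _ hq => pullbackLie_mem hp hq,
    fun _ hp _ hq => semidirectLie_eq_pullbackLie hp hq,
    fun X _ hp => pullbackAct_mem X hp,
    fun X p _ q _ => G.pullbackAct_pullbackLie f₀ X p q,
    G.pullbackAct_lie f₀,
    fun _ _ => rfl,
    fun _ hp _ _ => pullbackAct_fst_eq_pullbackLie hp,
    fun _ hp => δ_neg_snd_of_mem_pullback hp,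
    fun p _ q _ => neg_pullbackLie_snd p q,
    fun X p _ => G.neg_pullbackAct_snd f₀ X p⟩

theorem pullback_crossed_module_of_Lie_algebras
    (H : XModLie K h₀ h₁) (G : XModLie K g₀ g₁)
    (f₀ : h₀ →ₗ⁅K⁆ g₀) (f₁ : h₁ →ₗ⁅K⁆ g₁)
    (hδ : ∀ a : h₁, G.δ (f₁ a) = f₀ (H.δ a))
    (hact : ∀ (x : h₀) (a : h₁), f₁ (H.act x a) = G.act (f₀ x) (f₁ a)) :
    -- the pullback set
    let S : Set (h₀ × g₁) := {p | f₀ p.1 = - G.δ p.2}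
    -- the candidate bracket, boundary and action on `h₀ × g₁`
    let B : h₀ × g₁ → h₀ × g₁ → h₀ × g₁ := fun p q => (⁅p.1, q.1⁆, -⁅p.2, q.2⁆)
    let actP : h₀ → h₀ × g₁ → h₀ × g₁ := fun X p => (⁅X, p.1⁆, G.act (f₀ X) p.2)
    -- `S` is a linear subspace closed under the bracket `B`:
    (∀ p ∈ S, ∀ q ∈ S, p + q ∈ S) ∧
    (∀ (c : K), ∀ p ∈ S, c • p ∈ S) ∧
    (∀ p ∈ S, ∀ q ∈ S, B p q ∈ S) ∧
    -- on `S`, the semidirect product bracket coincides with `B`: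
    (∀ p ∈ S, ∀ q ∈ S,
      (⁅p.1, q.1⁆, G.act (f₀ p.1) q.2 - G.act (f₀ q.1) p.2 + ⁅p.2, q.2⁆) = B p q) ∧
    -- `actP` preserves `S` and, with `δ(X,a) = X`, satisfies the crossed module axioms:
    (∀ (X : h₀), ∀ p ∈ S, actP X p ∈ S) ∧
    (∀ (X : h₀), ∀ p ∈ S, ∀ q ∈ S, actP X (B p q) = B (actP X p) q + B p (actP X q)) ∧
    (∀ (X Y : h₀) (p : h₀ × g₁), actP ⁅X, Y⁆ p = actP X (actP Y p) - actP Y (actP X p)) ∧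
    (∀ (X : h₀) (p : h₀ × g₁), (actP X p).1 = ⁅X, p.1⁆) ∧
    (∀ p ∈ S, ∀ q ∈ S, actP p.1 q = B p q) ∧
    -- `(f̃₁, f₀)` with `f̃₁(X,a) = −a` is a morphism of crossed modules:
    (∀ p ∈ S, G.δ (-p.2) = f₀ p.1) ∧
    (∀ p ∈ S, ∀ q ∈ S, -((B p q).2) = ⁅-p.2, -q.2⁆) ∧
    (∀ (X : h₀), ∀ p ∈ S, -((actP X p).2) = G.act (f₀ X) (-p.2)) :=
  pullback_crossed_module_of_Lie_algebras_general G f₀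
end
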